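/- For any sets X and Y over a complete nonarchimedean field K, there is a natural isometric isomorphism of Banach spaces c₀(X) ⊗̂ c₀(Y) ≅ c₀(X × Y), where ⊗̂ denotes the completed projective tensor product. -/

import Mathlib

/-! On a discrete space every `h ∈ c₀(X × Y)` is the unconditionally convergent sum of
`h (x, y) • δ_(x,y)`, and `δ_(x,y) = δ_x ⊗ δ_y`. So a bounded bilinear `B` into a complete
ultrametric space `Z` extends uniquely, by `h ↦ ∑' p, h p • B δ_x δ_y`. The ultrametric inequality
bounds this series by `sup_p ‖h p‖ ‖B δ_x δ_y‖ ≤ c ‖h‖` for every bound `c` of `B`, so the extension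
has norm exactly the best bound of `B`. -/

open ZeroAtInfty BoundedContinuousFunction Filter Topology

namespace ZeroAtInftyContinuousMap

section Norm

variable {α E : Type*} [TopologicalSpace α] [SeminormedAddCommGroup E]

lemma norm_apply_le (f : C₀(α, E)) (a : α) : ‖f a‖ ≤ ‖f‖ :=
  f.toBCF.norm_coe_le_norm a

lemma norm_le {f : C₀(α, E)} {C : ℝ} (hC : 0 ≤ C) : ‖f‖ ≤ C ↔ ∀ a, ‖f a‖ ≤ C :=
  BoundedContinuousFunction.norm_le (f := f.toBCF) hC

lemma norm_eq_iSup_norm (f : C₀(α, E)) : ‖f‖ = ⨆ a, ‖f a‖ :=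
  f.toBCF.norm_eq_iSup_norm

lemma isBoundedUnder_norm {ι : Type*} {l : Filter ι} (f : C₀(α, E)) (u : ι → α) :
    IsBoundedUnder (· ≤ ·) l (norm ∘ f ∘ u) :=
  isBoundedUnder_of ⟨‖f‖, fun i ↦ f.norm_apply_le (u i)⟩

lemma coe_sum {ι : Type*} (s : Finset ι) (f : ι → C₀(α, E)) :
    ⇑(∑ i ∈ s, f i) = ∑ i ∈ s, ⇑(f i) :=
  map_sum (⟨⟨_, coe_zero⟩, coe_add⟩ : C₀(α, E) →+ α → E) f s

end Norm

section Discrete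

variable {α E : Type*} [TopologicalSpace α] [DiscreteTopology α]

lemma tendsto_cofinite_zero [Zero E] [TopologicalSpace E] (f : C₀(α, E)) :
    Tendsto f cofinite (𝓝 0) := by
  simpa [cocompact_eq_cofinite] using zero_at_infty f

def ofTendstoCofinite [Zero E] [TopologicalSpace E] (f : α → E)
    (hf : Tendsto f cofinite (𝓝 0)) : C₀(α, E) where
  toFun := f
  continuous_toFun := continuous_of_discreteTopology
  zero_at_infty' := by rwa [cocompact_eq_cofinite]

open scoped Classical in
noncomputable def single [AddZeroClass E] [TopologicalSpace E] (a : α) (e : E) : C₀(α, E) :=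
  ofTendstoCofinite (Pi.single a e) <| tendsto_const_nhds.congr' <|
    (eventually_cofinite_ne a).mono fun _ hb ↦ by simp [hb]

open scoped Classical in
@[simp] lemma coe_single [AddZeroClass E] [TopologicalSpace E] (a : α) (e : E) :
    ⇑(single a e) = Pi.single a e := rfl

lemma single_eq_smul_single_one {K : Type*} [NormedField K] (a : α) (k : K) :
    single a k = k • single a 1 := by
  ext b
  simp [Pi.single_apply]

variable [NormedAddCommGroup E]

lemma norm_single_le (a : α) (e : E) : ‖single a e‖ ≤ ‖e‖ := by
  refine (norm_le (norm_nonneg e)).2 fun b ↦ ?_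
  rcases eq_or_ne b a with rfl | hb <;> simp [*]

lemma hasSum_single (f : C₀(α, E)) : HasSum (fun a ↦ single a (f a)) f := by
  classical
  refine Metric.nhds_basis_closedBall.tendsto_right_iff.2 fun ε hε ↦ ?_
  have hfin : {a | ε ≤ ‖f a‖}.Finite := by
    simpa [not_lt] using Metric.tendsto_nhds.1 f.tendsto_cofinite_zero ε hε
  filter_upwards [eventually_ge_atTop hfin.toFinset] with s hs
  rw [Metric.mem_closedBall, dist_eq_norm, norm_le hε.le]
  intro b
  have hsum : (∑ a ∈ s, single a (f a)) b = if b ∈ s then f b else 0 := by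
    simp [coe_sum, Finset.sum_pi_single]
  by_cases hb : b ∈ s
  · simp [hsum, hb, hε.le]
  · have : ‖f b‖ < ε := not_le.1 fun h ↦ hb (hs (hfin.mem_toFinset.2 h))
    simpa [hsum, hb] using this.le

theorem ext_single {K F : Type*} [NormedField K] [NormedSpace K E] [AddCommMonoid F] [Module K F]
    [TopologicalSpace F] [T2Space F] {T T' : C₀(α, E) →L[K] F}
    (h : ∀ a e, T (single a e) = T' (single a e)) : T = T' := by
  ext f
  refine ((hasSum_single f).mapL T).unique ?_
  simpa only [h] using (hasSum_single f).mapL T'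

end Discrete

section ProdMul

variable {K X Y : Type*} [TopologicalSpace X] [DiscreteTopology X]
  [TopologicalSpace Y] [DiscreteTopology Y]

section

variable [NormedField K]

noncomputable def prodMul (f : C₀(X, K)) (g : C₀(Y, K)) : C₀(X × Y, K) :=
  ofTendstoCofinite (fun p ↦ f p.1 * g p.2) <| by
    rw [← coprod_cofinite, Filter.coprod, tendsto_sup]
    exact ⟨(f.tendsto_cofinite_zero.comp tendsto_comap).zero_mul_isBoundedUnder_le
        (g.isBoundedUnder_norm Prod.snd),
      isBoundedUnder_le_mul_tendsto_zero (f.isBoundedUnder_norm Prod.fst)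
        (g.tendsto_cofinite_zero.comp tendsto_comap)⟩

@[simp] lemma prodMul_apply (f : C₀(X, K)) (g : C₀(Y, K)) (p : X × Y) :
    prodMul f g p = f p.1 * g p.2 := rfl

lemma norm_prodMul (f : C₀(X, K)) (g : C₀(Y, K)) : ‖prodMul f g‖ = ‖f‖ * ‖g‖ := by
  refine le_antisymm ((norm_le (by positivity)).2 fun p ↦ ?_) ?_
  · rw [prodMul_apply, norm_mul]
    exact mul_le_mul (f.norm_apply_le _) (g.norm_apply_le _) (norm_nonneg _) (norm_nonneg _)
  · rw [f.norm_eq_iSup_norm, Real.iSup_mul_of_nonneg (norm_nonneg g)]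
    refine Real.iSup_le (fun x ↦ ?_) (norm_nonneg _)
    rw [g.norm_eq_iSup_norm, Real.mul_iSup_of_nonneg (norm_nonneg _)]
    refine Real.iSup_le (fun y ↦ ?_) (norm_nonneg _)
    simpa using (prodMul f g).norm_apply_le (x, y)

lemma prodMul_single_single (x : X) (y : Y) (a b : K) :
    prodMul (single x a) (single y b) = single (x, y) (a * b) := by
  ext ⟨x', y'⟩
  rcases eq_or_ne x' x with rfl | hx <;> rcases eq_or_ne y' y with rfl | hy <;> simp [*]

end

variable [NontriviallyNormedField K]

noncomputable def prodMulL : C₀(X, K) →L[K] C₀(Y, K) →L[K] C₀(X × Y, K) :=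
  LinearMap.mkContinuous₂
    (LinearMap.mk₂ K prodMul
      (fun f f' g ↦ by ext; simp [add_mul])
      (fun k f g ↦ by ext; simp [mul_assoc])
      (fun f g g' ↦ by ext; simp [mul_add])
      (fun k f g ↦ by ext; simp [mul_left_comm]))
    1 (fun f g ↦ by simp [norm_prodMul])

@[simp] lemma prodMulL_apply (f : C₀(X, K)) (g : C₀(Y, K)) : prodMulL f g = prodMul f g := rfl

theorem ext_prodMulL {F : Type*} [AddCommMonoid F] [Module K F] [TopologicalSpace F] [T2Space F]
    {T T' : C₀(X × Y, K) →L[K] F} (h : ∀ f g, T (prodMul f g) = T' (prodMul f g)) : T = T' :=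
  ext_single fun p k ↦ by simpa [prodMul_single_single] using h (single p.1 k) (single p.2 1)

end ProdMul

section TsumSMul

variable {K ι Z : Type*} [NormedField K] [TopologicalSpace ι]
  [NormedAddCommGroup Z] [NormedSpace K Z] [IsUltrametricDist Z]

lemma norm_tsum_smul_le {w : ι → Z} {C : ℝ} (hC : 0 ≤ C) (hw : ∀ i, ‖w i‖ ≤ C)
    (h : C₀(ι, K)) : ‖∑' i, h i • w i‖ ≤ C * ‖h‖ :=
  IsUltrametricDist.norm_tsum_le_of_forall_le_of_nonneg (by positivity) fun i ↦ by
    rw [norm_smul, mul_comm C]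
    exact mul_le_mul (h.norm_apply_le i) (hw i) (norm_nonneg _) (norm_nonneg _)

variable [DiscreteTopology ι] [CompleteSpace Z]

lemma summable_smul (h : C₀(ι, K)) (w : ι →ᵇ Z) : Summable fun i ↦ h i • w i :=
  NonarchimedeanAddGroup.summable_of_tendsto_cofinite_zero <|
    h.tendsto_cofinite_zero.zero_smul_isBoundedUnder_le <|
      isBoundedUnder_of ⟨‖w‖, w.norm_coe_le_norm⟩

noncomputable def tsumSMulL (w : ι →ᵇ Z) : C₀(ι, K) →L[K] Z :=
  LinearMap.mkContinuous
    { toFun h := ∑' i, h i • w i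
      map_add' h h' := by
        simp only [coe_add, Pi.add_apply, add_smul]
        exact (h.summable_smul w).tsum_add (h'.summable_smul w)
      map_smul' k h := by
        simp only [coe_smul, Pi.smul_apply, smul_assoc, RingHom.id_apply]
        exact (h.summable_smul w).tsum_const_smul k }
    ‖w‖ (norm_tsum_smul_le (norm_nonneg w) w.norm_coe_le_norm)

lemma tsumSMulL_apply (w : ι →ᵇ Z) (h : C₀(ι, K)) : tsumSMulL w h = ∑' i, h i • w i := rfl

lemma tsumSMulL_single (w : ι →ᵇ Z) (i : ι) (k : K) : tsumSMulL w (single i k) = k • w i := by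
  rw [tsumSMulL_apply, tsum_eq_single i fun j hj ↦ by simp [hj]]
  simp

end TsumSMul

section Lift

variable {K Z X Y : Type*} [NontriviallyNormedField K]
  [NormedAddCommGroup Z] [NormedSpace K Z] [IsUltrametricDist Z]
  [TopologicalSpace X] [DiscreteTopology X] [TopologicalSpace Y] [DiscreteTopology Y]

lemma norm_apply_single_single_le (B : C₀(X, K) →L[K] C₀(Y, K) →L[K] Z) {c : ℝ} (hc : 0 ≤ c)
    (hB : ∀ f g, ‖B f g‖ ≤ c * ‖f‖ * ‖g‖) (x : X) (y : Y) :
    ‖B (single x 1) (single y 1)‖ ≤ c :=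
  calc ‖B (single x 1) (single y 1)‖ ≤ c * ‖single x (1 : K)‖ * ‖single y (1 : K)‖ := hB _ _
    _ ≤ c * 1 * 1 := by gcongr <;> simpa using norm_single_le _ (1 : K)
    _ = c := by ring

variable [CompleteSpace Z] (B : C₀(X, K) →L[K] C₀(Y, K) →L[K] Z)

set_option maxSynthPendingDepth 2 in
noncomputable def liftProdMul : C₀(X × Y, K) →L[K] Z :=
  tsumSMulL <| .ofNormedAddCommGroupDiscrete (fun p ↦ B (single p.1 1) (single p.2 1)) ‖B‖
    fun p ↦ norm_apply_single_single_le B (norm_nonneg B) B.le_opNorm₂ p.1 p.2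

lemma liftProdMul_single (x : X) (y : Y) (k : K) :
    liftProdMul B (single (x, y) k) = k • B (single x 1) (single y 1) :=
  tsumSMulL_single _ _ k

lemma liftProdMul_prodMul (f : C₀(X, K)) (g : C₀(Y, K)) :
    liftProdMul B (prodMul f g) = B f g := by
  have hsingle (x : X) (a : K) : (liftProdMul B).comp (prodMulL (single x a)) = B (single x a) :=
    ext_single fun y b ↦ by
      rw [single_eq_smul_single_one x a, single_eq_smul_single_one y b]
      simp [prodMul_single_single, liftProdMul_single, smul_smul]
  suffices (liftProdMul B).comp (prodMulL.flip g) = B.flip g from congr($this f)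
  exact ext_single fun x a ↦ by simpa using congr($(hsingle x a) g)

lemma norm_liftProdMul_le {c : ℝ} (hc : 0 ≤ c) (hB : ∀ f g, ‖B f g‖ ≤ c * ‖f‖ * ‖g‖) :
    ‖liftProdMul B‖ ≤ c :=
  ContinuousLinearMap.opNorm_le_bound _ hc <|
    norm_tsum_smul_le hc fun p ↦ norm_apply_single_single_le B hc hB p.1 p.2

lemma isLeast_norm_liftProdMul :
    IsLeast {c : ℝ | 0 ≤ c ∧ ∀ f g, ‖B f g‖ ≤ c * ‖f‖ * ‖g‖} ‖liftProdMul B‖ := by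
  refine ⟨⟨(liftProdMul B).opNorm_nonneg, fun f g ↦ ?_⟩,
    fun c ⟨hc, hB⟩ ↦ norm_liftProdMul_le B hc hB⟩
  calc ‖B f g‖ = ‖liftProdMul B (prodMul f g)‖ := by rw [liftProdMul_prodMul]
    _ ≤ ‖liftProdMul B‖ * ‖prodMul f g‖ := (liftProdMul B).le_opNorm _
    _ = ‖liftProdMul B‖ * ‖f‖ * ‖g‖ := by rw [norm_prodMul, mul_assoc]

end Lift

end ZeroAtInftyContinuousMap

open ZeroAtInfty

theorem stmt1.{u} {K : Type*} [NontriviallyNormedField K] [CompleteSpace K] [IsUltrametricDist K]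
    {X Y : Type*} [TopologicalSpace X] [DiscreteTopology X]
    [TopologicalSpace Y] [DiscreteTopology Y] :
    ∃ m : C₀(X, K) →L[K] C₀(Y, K) →L[K] C₀(X × Y, K),
      (∀ (f : C₀(X, K)) (g : C₀(Y, K)) (x : X) (y : Y), m f g (x, y) = f x * g y) ∧
      (∀ (f : C₀(X, K)) (g : C₀(Y, K)), ‖m f g‖ = ‖f‖ * ‖g‖) ∧
      (∀ (Z : Type u) [NormedAddCommGroup Z] [NormedSpace K Z] [CompleteSpace Z]
          [IsUltrametricDist Z] (B : C₀(X, K) →L[K] C₀(Y, K) →L[K] Z),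
        ∃! T : C₀(X × Y, K) →L[K] Z,
          (∀ (f : C₀(X, K)) (g : C₀(Y, K)), T (m f g) = B f g) ∧
          ‖T‖ = sInf {c : ℝ | 0 ≤ c ∧ ∀ (f : C₀(X, K)) (g : C₀(Y, K)),
            ‖B f g‖ ≤ c * ‖f‖ * ‖g‖}) := by
  open ZeroAtInftyContinuousMap in
  refine ⟨prodMulL, fun f g x y ↦ rfl, norm_prodMul, fun Z _ _ _ _ B ↦ ?_⟩
  refine ⟨liftProdMul B, ⟨liftProdMul_prodMul B, (isLeast_norm_liftProdMul B).csInf_eq.symm⟩, ?_⟩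
  rintro T ⟨hT, -⟩
  exact ext_prodMulL fun f g ↦ (hT f g).trans (liftProdMul_prodMul B f g).symm
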